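/- Barrington's theorem: every Boolean function computed by a fan-in-2 Boolean circuit of depth d can be computed by a width-5 permutation branching program of length at most 4^d. -/

import Mathlib

open Equiv

/-- Fan-in-2 Boolean circuits over {AND, OR, NOT} with `n` input variables. -/
inductive Circuit (n : ℕ) : Type
  | var : Fin n → Circuit n
  | not : Circuit n → Circuit n
  | and : Circuit n → Circuit n → Circuit n
  | or : Circuit n → Circuit n → Circuit n

namespace Circuit

def eval {n : ℕ} : Circuit n → (Fin n → Bool) → Bool
  | var i, x => x i
  | not C, x => !(C.eval x)
  | and C₁ C₂, x => C₁.eval x && C₂.eval x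
  | or C₁ C₂, x => C₁.eval x || C₂.eval x

def depth {n : ℕ} : Circuit n → ℕ
  | var _ => 0
  | not C => C.depth + 1
  | and C₁ C₂ => max C₁.depth C₂.depth + 1
  | or C₁ C₂ => max C₁.depth C₂.depth + 1

end Circuit

/-- A width-5 permutation branching program on `n` input bits: a list of
instructions `⟨i, σ¹, σ⁰⟩`. -/
def BP (n : ℕ) : Type := List (Fin n × Equiv.Perm (Fin 5) × Equiv.Perm (Fin 5))

/-- Executing a width-5 permutation branching program on input `x`:
compose, instruction by instruction, `σ¹` if `x i = 1` and `σ⁰` if `x i = 0`. -/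
def BP.exec {n : ℕ} (prog : BP n) (x : Fin n → Bool) : Equiv.Perm (Fin 5) :=
  (prog.map (fun ins => if x ins.1 then ins.2.1 else ins.2.2)).prod


/-!
Induct on the circuit, asking for programs that output an arbitrary prescribed 5-cycle `τ`: any
two 5-cycles are conjugate, and conjugating every instruction conjugates the output, so the
choice of `τ` costs nothing. Negation multiplies the first instruction by `τ` in a program for
`τ⁻¹`. Conjunction concatenates programs outputting `σ`, `ρ`, `σ⁻¹`, `ρ⁻¹`, whose product is
the commutator `⁅σ, ρ⁆` if both inputs are true and `1` otherwise; for a suitable pair of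
5-cycles the commutator is again a 5-cycle, and the length grows by a factor of 4 per level.
Disjunction follows by De Morgan.
-/

open scoped commutatorElement

namespace Equiv.Perm

variable {p : ℕ} [Fact p.Prime] {σ τ : Perm (Fin p)}

theorem isCycle_of_orderOf_eq_prime (h : orderOf σ = p) : σ.IsCycle :=
  isCycle_of_prime_order'' (by simpa using Fact.out) (by simpa using h)

theorem card_support_of_orderOf_eq_prime (h : orderOf σ = p) : σ.support.card = p :=
  (isCycle_of_orderOf_eq_prime h).orderOf ▸ h

theorem isConj_of_orderOf_eq_prime (hσ : orderOf σ = p) (hτ : orderOf τ = p) : IsConj σ τ :=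
  (isCycle_of_orderOf_eq_prime hσ).isConj (isCycle_of_orderOf_eq_prime hτ)
    (by rw [card_support_of_orderOf_eq_prime hσ, card_support_of_orderOf_eq_prime hτ])

end Equiv.Perm

instance : Fact (Nat.Prime 5) := ⟨Nat.prime_five⟩

/-- The 5-cycle `(0 2 4 3 1)`. -/
def partnerCycle : Perm (Fin 5) := ⟨![2, 0, 4, 1, 3], ![1, 3, 0, 4, 2], by decide, by decide⟩

theorem orderOf_finRotate_five : orderOf (finRotate 5) = 5 :=
  orderOf_eq_prime (by decide) (by decide)

theorem orderOf_partnerCycle : orderOf partnerCycle = 5 :=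
  orderOf_eq_prime (by decide +kernel) (by decide)

theorem orderOf_commutator_finRotate_partnerCycle : orderOf ⁅finRotate 5, partnerCycle⁆ = 5 :=
  orderOf_eq_prime (by decide +kernel) (by decide)

namespace BP

variable {n : ℕ}

abbrev Instr (n : ℕ) : Type := Fin n × Perm (Fin 5) × Perm (Fin 5)

def conj (α : Perm (Fin 5)) (p : List (Instr n)) : List (Instr n) :=
  p.map fun ins => (ins.1, MulAut.conj α ins.2.1, MulAut.conj α ins.2.2)

def mulLeft (π : Perm (Fin 5)) (p : List (Instr n)) : List (Instr n) :=
  p.modifyHead fun ins => (ins.1, π * ins.2.1, π * ins.2.2)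

theorem exec_append (p q : List (Instr n)) (x : Fin n → Bool) :
    exec (p ++ q) x = exec p x * exec q x := by
  simp [exec]

theorem exec_conj (α : Perm (Fin 5)) (p : List (Instr n)) (x : Fin n → Bool) :
    exec (conj α p) x = MulAut.conj α (exec p x) := by
  simp only [exec, conj, map_list_prod, List.map_map]
  exact congrArg List.prod (List.map_congr_left fun ins _ =>
    (apply_ite (MulAut.conj α) (x ins.1 = true) ins.2.1 ins.2.2).symm)

theorem exec_mulLeft (π : Perm (Fin 5)) {p : List (Instr n)} (hp : p ≠ []) (x : Fin n → Bool) :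
    exec (mulLeft π p) x = π * exec p x := by
  obtain ⟨ins, p, rfl⟩ := List.exists_cons_of_ne_nil hp
  cases h : x ins.1 <;> simp [exec, mulLeft, h, mul_assoc]

def Computes (p : List (Instr n)) (f : (Fin n → Bool) → Bool) (τ : Perm (Fin 5)) : Prop :=
  ∀ x, exec p x = if f x then τ else 1

variable {f g : (Fin n → Bool) → Bool} {σ ρ τ : Perm (Fin 5)}

theorem Computes.conj {p : List (Instr n)} (h : Computes p f τ) (α : Perm (Fin 5)) :
    Computes (BP.conj α p) f (MulAut.conj α τ) := by
  intro x
  rw [exec_conj, h x]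
  split <;> simp

theorem Computes.not {p : List (Instr n)} (h : Computes p f τ⁻¹) (hp : p ≠ []) :
    Computes (mulLeft τ p) (fun x => !f x) τ := by
  intro x
  rw [exec_mulLeft _ hp, h x]
  cases hfx : f x <;> simp [hfx]

theorem Computes.and {p₁ p₂ p₃ p₄ : List (Instr n)} (h₁ : Computes p₁ f σ) (h₂ : Computes p₂ g ρ)
    (h₃ : Computes p₃ f σ⁻¹) (h₄ : Computes p₄ g ρ⁻¹) :
    Computes (p₁ ++ p₂ ++ p₃ ++ p₄) (fun x => f x && g x) ⁅σ, ρ⁆ := by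
  intro x
  rw [exec_append, exec_append, exec_append, h₁ x, h₂ x, h₃ x, h₄ x, commutatorElement_def]
  cases hfx : f x <;> cases hgx : g x <;> simp [hfx, hgx]

/-- Nonemptiness leaves a first instruction to absorb the constant factor of a negation. -/
def ComputableWithin (f : (Fin n → Bool) → Bool) (k : ℕ) : Prop :=
  ∀ τ : Perm (Fin 5), orderOf τ = 5 →
    ∃ p : List (Instr n), p ≠ [] ∧ p.length ≤ k ∧ Computes p f τ

variable {k : ℕ}

theorem ComputableWithin.mono (h : ComputableWithin f k) {k' : ℕ} (hk : k ≤ k') :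
    ComputableWithin f k' := fun τ hτ =>
  let ⟨p, hp, hlen, hf⟩ := h τ hτ
  ⟨p, hp, hlen.trans hk, hf⟩

theorem ComputableWithin.of_computes {p : List (Instr n)} (hτ : orderOf τ = 5)
    (hp : p ≠ []) (hlen : p.length ≤ k) (h : Computes p f τ) : ComputableWithin f k := by
  intro τ' hτ'
  obtain ⟨α, hα⟩ := isConj_iff.mp (Perm.isConj_of_orderOf_eq_prime hτ hτ')
  refine ⟨BP.conj α p, by simpa [BP.conj] using hp, by simpa [BP.conj] using hlen, ?_⟩
  simpa [hα] using h.conj α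

theorem computableWithin_var (i : Fin n) : ComputableWithin (fun x => x i) 1 := fun τ _ =>
  ⟨[(i, τ, 1)], List.cons_ne_nil _ _, le_rfl, fun x => by cases x i <;> simp [exec]⟩

theorem ComputableWithin.not (h : ComputableWithin f k) :
    ComputableWithin (fun x => !f x) k := by
  intro τ hτ
  obtain ⟨p, hp, hlen, hf⟩ := h τ⁻¹ (by rwa [orderOf_inv])
  exact ⟨mulLeft τ p, by simpa [mulLeft] using hp, by simpa [mulLeft] using hlen, hf.not hp⟩

theorem ComputableWithin.and (hf : ComputableWithin f k) (hg : ComputableWithin g k) :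
    ComputableWithin (fun x => f x && g x) (4 * k) := by
  obtain ⟨p₁, hp₁, hlen₁, h₁⟩ := hf _ orderOf_finRotate_five
  obtain ⟨p₂, -, hlen₂, h₂⟩ := hg _ orderOf_partnerCycle
  obtain ⟨p₃, -, hlen₃, h₃⟩ := hf _ (by rw [orderOf_inv, orderOf_finRotate_five])
  obtain ⟨p₄, -, hlen₄, h₄⟩ := hg _ (by rw [orderOf_inv, orderOf_partnerCycle])
  refine .of_computes orderOf_commutator_finRotate_partnerCycle (by simp [hp₁]) ?_
    (h₁.and h₂ h₃ h₄)
  simp only [List.length_append]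
  omega

theorem ComputableWithin.or (hf : ComputableWithin f k) (hg : ComputableWithin g k) :
    ComputableWithin (fun x => f x || g x) (4 * k) := by
  simpa [Bool.not_and] using (hf.not.and hg.not).not

end BP

theorem Circuit.computableWithin_eval {n : ℕ} :
    ∀ C : Circuit n, BP.ComputableWithin C.eval (4 ^ C.depth)
  | var i => BP.computableWithin_var i
  | not C => by
    rw [depth]
    exact (computableWithin_eval C).not.mono (by gcongr <;> omega)
  | and C₁ C₂ => by
    rw [depth, pow_succ']
    exact ((computableWithin_eval C₁).mono (by gcongr <;> omega)).and
      ((computableWithin_eval C₂).mono (by gcongr <;> omega))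
  | or C₁ C₂ => by
    rw [depth, pow_succ']
    exact ((computableWithin_eval C₁).mono (by gcongr <;> omega)).or
      ((computableWithin_eval C₂).mono (by gcongr <;> omega))

/-- Barrington's theorem: every Boolean function computed by a fan-in-2 Boolean
circuit of depth `d` is computed by a width-5 permutation branching program of
length at most `4 ^ d` (the program outputs a fixed 5-cycle on accepted inputs
and the identity on rejected inputs). -/
theorem barrington {n : ℕ} (C : Circuit n) :
    ∃ (prog : BP n) (τ : Equiv.Perm (Fin 5)),
      τ.IsCycle ∧ τ.support.card = 5 ∧
      prog.length ≤ 4 ^ C.depth ∧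
      ∀ x : Fin n → Bool, prog.exec x = if C.eval x then τ else 1 := by
  obtain ⟨prog, -, hlen, hprog⟩ := C.computableWithin_eval _ orderOf_finRotate_five
  exact ⟨prog, finRotate 5, Perm.isCycle_of_orderOf_eq_prime orderOf_finRotate_five,
    Perm.card_support_of_orderOf_eq_prime orderOf_finRotate_five, hlen, hprog⟩
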